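/- Let Π = (π_1,…,π_ℓ) be permutations of [k], let f : ({0,1}^n)^k → {0,1}, let S be a Π-repetitive set, and let Q_{π_1},…,Q_{π_ℓ} be oblivious protocols computing f in MYOPIC_{π_1},…,MYOPIC_{π_ℓ} respectively, all with the same communication pattern: for each t ∈ [k−1] there is a number L(t) such that in every protocol Q_{π_u} and on every input, the message sent at step t (from P_{π_u(t)} to P_{π_u(t+1)}) has length exactly L(t). Then D^NOF(f^ℓ) ≤ ℓ·C + ℓ − Σ_{(t,s,U)∈S} (|U|−1)·L(t), where C = Σ_{t=1}^{k−1} L(t) is the cost of Q_{π_1}. -/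

import Mathlib

/-!  Deterministic `k`-party Number-On-the-Forehead (NOF) blackboard protocols.
Inputs come from a type `X`; party `P_i` sees every input except its own, which is
modelled by giving each party the "erased" input vector `NOFview i x` (its own
coordinate replaced by `none`).  At each step the speaker (determined by the
transcript written so far on the shared board) writes one bit, depending on the
transcript and on the inputs it sees.  After `P.T` steps every party must be able
to determine the required output from the transcript and the inputs it sees. -/
structure NOFProtocol (k : ℕ) (X O : Type) where
  /-- number of bits written on the board (the cost of the protocol) -/
  T : ℕ
  /-- who speaks next, as a function of the transcript -/
  speaker : List Bool → Fin k
  /-- the bit written by the speaker: a function of the transcript and of the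
  inputs the speaker sees -/
  nextBit : List Bool → (Fin k → Option X) → Bool
  /-- how party `i` determines the output from the final transcript and the
  inputs it sees -/
  out : Fin k → List Bool → (Fin k → Option X) → O

/-- What party `i` sees in the NOF model: every input except its own. -/
def NOFview {k : ℕ} {X : Type} (i : Fin k) (x : Fin k → X) : Fin k → Option X :=
  fun j => if j = i then none else some (x j)

/-- The transcript on the board after `t` steps. -/
def NOFrun {k : ℕ} {X O : Type} (P : NOFProtocol k X O) (x : Fin k → X) : ℕ → List Bool
  | 0 => []
  | t + 1 => NOFrun P x t ++ [P.nextBit (NOFrun P x t) (NOFview (P.speaker (NOFrun P x t)) x)]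

/-- `P` computes `F` if, on every input, every party determines `F x` from the
final transcript and the inputs it sees. -/
def NOFComputes {k : ℕ} {X O : Type} (P : NOFProtocol k X O) (F : (Fin k → X) → O) : Prop :=
  ∀ x i, P.out i (NOFrun P x P.T) (NOFview i x) = F x

/-- Deterministic NOF communication complexity: the least cost of a protocol computing `F`. -/
noncomputable def DNOF (k : ℕ) (X O : Type) (F : (Fin k → X) → O) : ℕ :=
  sInf {c | ∃ P : NOFProtocol k X O, P.T = c ∧ NOFComputes P F}

/-- The `ℓ`-fold direct sum `f^ℓ`: party `j` holds the `ℓ` inputs `x j 0, …, x j (ℓ-1)`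
on its forehead, and all `ℓ` values `f` on the respective instances must be computed. -/
def directSum {k n : ℕ} (ℓ : ℕ) (f : (Fin k → (Fin n → Bool)) → Bool) :
    (Fin k → (Fin ℓ → Fin n → Bool)) → (Fin ℓ → Bool) :=
  fun x u => f fun j => x j u

/-!  The myopic one-way model `MYOPIC_π`.  The parties speak one-way in the order
`π(1),…,π(k)` (here positions are 0-based: at step `t ∈ {0,…,k-2}` the party at
position `t`, i.e. `π(t)`, sends a single message to the party at position `t+1`,
and the party at position `k-1` announces the output).  The party at position `t`
sees only the inputs of the previous parties (positions `< t`) and of the next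
party (position `t+1`), and its message depends only on these inputs and on the
message it received. -/
structure MyoProtocol (k : ℕ) (X O : Type) where
  /-- `msg t prev view`: the message sent at step `t` by the party at position `t`
  to the party at position `t+1`, given the message `prev` it received and the
  inputs `view` it sees. -/
  msg : ℕ → List Bool → (Fin k → Option X) → List Bool
  /-- the output announced by the last party, from the message it received and the
  inputs it sees -/
  out : List Bool → (Fin k → Option X) → O

/-- What the party at position `t` in the order `π` sees: the inputs of the parties
at positions `< t` and of the party at position `t+1`. -/
def myoView {k : ℕ} {X : Type} (π : Equiv.Perm (Fin k)) (t : ℕ) (x : Fin k → X) :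
    Fin k → Option X :=
  fun j => if ((π.symm j : ℕ) < t ∨ (π.symm j : ℕ) = t + 1) then some (x j) else none

/-- `myoMsg π P x t`: the message sent at step `t` when running `P` on input `x`
in the order `π`. -/
def myoMsg {k : ℕ} {X O : Type} (π : Equiv.Perm (Fin k)) (P : MyoProtocol k X O)
    (x : Fin k → X) : ℕ → List Bool
  | 0 => P.msg 0 [] (myoView π 0 x)
  | t + 1 => P.msg (t + 1) (myoMsg π P x t) (myoView π (t + 1) x)

/-- `P` computes `F` in `MYOPIC_π`: the last party announces `F x` on every input. -/
def MyoComputes {k : ℕ} {X O : Type} (π : Equiv.Perm (Fin k)) (P : MyoProtocol k X O)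
    (F : (Fin k → X) → O) : Prop :=
  ∀ x, P.out (myoMsg π P x (k - 2)) (myoView π (k - 1) x) = F x

/-- A triplet `(t, s, U)` is `Π`-binding (Definition 11 of the paper, with 0-based
steps `t`): (1) in every `π_u`, `u ∈ U`, party `s` is at position `t`; (2) the
parties at position `t+1` in the orders `π_u`, `u ∈ U`, are pairwise distinct
(`|{π_u(t+1) : u ∈ U}| = |U|`); (3) no party appearing at a position `< t` in some
`π_u`, `u ∈ U`, is at position `t+1` in some `π_{u'}`, `u' ∈ U`. -/
def IsBinding (k ℓ : ℕ) (πs : Fin ℓ → Equiv.Perm (Fin k))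
    (t : ℕ) (s : Fin k) (U : Finset (Fin ℓ)) : Prop :=
  t + 1 < k ∧
    (∀ u ∈ U, ((πs u).symm s : ℕ) = t) ∧
    (∀ u ∈ U, ∀ u' ∈ U, ∀ p : Fin k,
      ((πs u).symm p : ℕ) = t + 1 → ((πs u').symm p : ℕ) = t + 1 → u = u') ∧
    ∀ u ∈ U, ∀ u' ∈ U, ∀ p : Fin k,
      ((πs u).symm p : ℕ) < t → ((πs u').symm p : ℕ) ≠ t + 1

/-- A `Π`-repetitive set (Definition 12 of the paper): a set of `Π`-binding triplets
such that for all distinct `(t₁,s₁,U₁), (t₂,s₂,U₂)` in the set: `s₁` is not at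
position `t₂+1` in any `π_u`, `u ∈ U₂`, and if `(t₁,s₁) = (t₂,s₂)` then
`U₁ ∩ U₂ = ∅`. -/
def IsRepetitive (k ℓ : ℕ) (πs : Fin ℓ → Equiv.Perm (Fin k))
    (S : Finset (ℕ × Fin k × Finset (Fin ℓ))) : Prop :=
  (∀ s ∈ S, IsBinding k ℓ πs s.1 s.2.1 s.2.2) ∧
    ∀ s ∈ S, ∀ s' ∈ S, s ≠ s' →
      (∀ u ∈ s'.2.2, ((πs u).symm s.2.1 : ℕ) ≠ s'.1 + 1) ∧
      ((s.1, s.2.1) = (s'.1, s'.2.1) → s.2.2 ∩ s'.2.2 = ∅)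

/-!
The `ℓ` instances are simulated side by side on the blackboard, step by step: the message of
`Q_{π_u}` at step `t` is written by `π_u(t)`, who sees all that its myopic counterpart sees.
For a triplet `(t, s, U)` of `S`, party `s` is at step `t` the speaker of every instance in `U`,
so it writes only the XOR of their `|U|` messages, saving `(|U| - 1) L(t)` bits. The next party
`π_u(t+1)` of an instance `u ∈ U` gets its message back by recomputing the other messages of `U`:
by the binding conditions it sees every input these depend on, and by repetitiveness the messages
they received at step `t - 1` are on the board in clear. Finally each `π_u(k)` announces the
`u`-th output bit, at a cost of `ℓ` bits.
-/

def List.fitLength (c : ℕ) (w : List Bool) : List Bool :=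
  (List.range c).map fun i => w.getD i false

@[simp]
theorem List.length_fitLength (c : ℕ) (w : List Bool) : (w.fitLength c).length = c := by
  simp [List.fitLength]

theorem List.fitLength_of_length_eq {c : ℕ} {w : List Bool} (h : w.length = c) :
    w.fitLength c = w := by
  apply List.ext_getElem (by simp [h])
  intro i _ hi
  simp [List.fitLength, List.getElem?_eq_getElem hi]

/-- A blackboard protocol in rounds with fixed lengths: round `a` of `keys` is spoken by
`speaker a`, who writes `len a` bits computed from its view and from the record `κ → List Bool`
of the messages written so far (`[]` for rounds still to come). -/
structure NOFSchedule (k : ℕ) (X κ : Type) where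
  keys : List κ
  speaker : κ → Fin k
  len : κ → ℕ
  msg : κ → (κ → List Bool) → (Fin k → Option X) → List Bool

namespace NOFSchedule

variable {k : ℕ} {X O κ : Type} (σ : NOFSchedule k X κ)

def cost : ℕ := (σ.keys.map σ.len).sum

def written (x : Fin k → X) (a : κ) (m : κ → List Bool) : List Bool :=
  (σ.msg a m (NOFview (σ.speaker a) x)).fitLength (σ.len a)

@[simp]
theorem length_written (x : Fin k → X) (a : κ) (m : κ → List Bool) :
    (σ.written x a m).length = σ.len a :=
  List.length_fitLength _ _

variable [DecidableEq κ]

def board (x : Fin k → X) : List κ → (κ → List Bool) → List Bool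
  | [], _ => []
  | a :: as, m => σ.written x a m ++ board x as (Function.update m a (σ.written x a m))

def record (x : Fin k → X) : List κ → (κ → List Bool) → κ → List Bool
  | [], m => m
  | a :: as, m => record x as (Function.update m a (σ.written x a m))

def parse : List κ → (κ → List Bool) → List Bool → κ → List Bool
  | [], m, _ => m
  | a :: as, m, ts => parse as (Function.update m a (ts.take (σ.len a))) (ts.drop (σ.len a))

def speakerAt [NeZero k] : List κ → (κ → List Bool) → List Bool → Fin k
  | [], _, _ => 0
  | a :: as, m, ts =>
    if ts.length < σ.len a then σ.speaker a
    else speakerAt as (Function.update m a (ts.take (σ.len a))) (ts.drop (σ.len a))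

def bitAt : List κ → (κ → List Bool) → List Bool → (Fin k → Option X) → Bool
  | [], _, _, _ => false
  | a :: as, m, ts, v =>
    if ts.length < σ.len a then (σ.msg a m v).getD ts.length false
    else bitAt as (Function.update m a (ts.take (σ.len a))) (ts.drop (σ.len a)) v

/-- Since the lengths of the rounds are fixed, every party can cut the board into the messages
of the rounds written so far. -/
def toProtocol [NeZero k] (dec : Fin k → (κ → List Bool) → (Fin k → Option X) → O) :
    NOFProtocol k X O where
  T := σ.cost
  speaker := σ.speakerAt σ.keys fun _ => []
  nextBit := σ.bitAt σ.keys fun _ => []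
  out i ts v := dec i (σ.parse σ.keys (fun _ => []) ts) v

theorem length_board (x : Fin k → X) (as : List κ) (m : κ → List Bool) :
    (σ.board x as m).length = (as.map σ.len).sum := by
  induction as generalizing m with
  | nil => rfl
  | cons a as ih => simp [board, ih]

theorem parse_board (x : Fin k → X) (as : List κ) (m : κ → List Bool) :
    σ.parse as m (σ.board x as m) = σ.record x as m := by
  induction as generalizing m with
  | nil => rfl
  | cons a as ih =>
    have hw := σ.length_written x a m
    simp only [board, parse, record, List.take_left' hw, List.drop_left' hw, ih]

theorem bitAt_board [NeZero k] (x : Fin k → X) (as : List κ) (m : κ → List Bool) (t : ℕ) :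
    σ.bitAt as m ((σ.board x as m).take t)
      (NOFview (σ.speakerAt as m ((σ.board x as m).take t)) x) =
      (σ.board x as m).getD t false := by
  induction as generalizing m t with
  | nil => simp [board, bitAt]
  | cons a as ih =>
    have hw := σ.length_written x a m
    set w := σ.written x a m
    set B := σ.board x as (Function.update m a w)
    change σ.bitAt (a :: as) m ((w ++ B).take t)
      (NOFview (σ.speakerAt (a :: as) m ((w ++ B).take t)) x) = (w ++ B).getD t false
    by_cases hta : t < σ.len a
    · have hlen : ((w ++ B).take t).length = t := by simp [hw]; omega
      simp only [bitAt, speakerAt, hlen, hta, if_true]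
      rw [List.getD_eq_getElem?_getD (l := w ++ B), List.getElem?_append_left (hw ▸ hta)]
      simp [w, written, List.fitLength, hta]
    · have hsplit : (w ++ B).take t = w ++ B.take (t - σ.len a) := by
        rw [List.take_append, hw, List.take_of_length_le (by omega)]
      have hlen : ¬ ((w ++ B).take t).length < σ.len a := by simp [hsplit, hw]
      simp only [bitAt, speakerAt, hlen, if_false]
      rw [hsplit, List.take_left' hw, List.drop_left' hw, ih, List.getD_eq_getElem?_getD,
        List.getD_eq_getElem?_getD, List.getElem?_append_right (by omega), hw]

theorem run_toProtocol [NeZero k]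
    (dec : Fin k → (κ → List Bool) → (Fin k → Option X) → O) (x : Fin k → X) {t : ℕ}
    (ht : t ≤ σ.cost) :
    NOFrun (σ.toProtocol dec) x t = (σ.board x σ.keys fun _ => []).take t := by
  induction t with
  | zero => rfl
  | succ t ih =>
    have hlt : t < (σ.board x σ.keys fun _ => []).length := by
      rw [length_board]; exact ht
    rw [NOFrun, ih (by omega), List.take_add_one, List.getElem?_eq_getElem hlt]
    simp only [toProtocol, bitAt_board, List.getD_eq_getElem _ _ hlt, Option.toList_some]

/-- On input `x`, every round `a` writes `ideal a` as long as all earlier rounds did. -/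
def Realizes (x : Fin k → X) (ideal : κ → List Bool) : Prop :=
  (∀ a ∈ σ.keys, (ideal a).length = σ.len a) ∧
    ∀ done a rest, σ.keys = done ++ a :: rest → ∀ m : κ → List Bool,
      (∀ b ∈ done, m b = ideal b) → σ.msg a m (NOFview (σ.speaker a) x) = ideal a

theorem record_eq_of_realizes {x : Fin k → X} {ideal : κ → List Bool} (h : σ.Realizes x ideal)
    (done rest : List κ) (m : κ → List Bool) (hks : σ.keys = done ++ rest)
    (hm : ∀ b ∈ done, m b = ideal b) : ∀ a ∈ σ.keys, σ.record x rest m a = ideal a := by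
  induction rest generalizing done m with
  | nil => simpa [record, hks] using hm
  | cons a rest ih =>
    have ha : a ∈ σ.keys := by simp [hks]
    have hw : σ.written x a m = ideal a := by
      rw [written, h.2 done a rest hks m hm, List.fitLength_of_length_eq (h.1 a ha)]
    refine ih (done ++ [a]) _ (by simp [hks]) fun b hb => ?_
    rw [hw]
    by_cases hba : b = a
    · subst hba; exact Function.update_self _ _ _
    · rw [Function.update_of_ne hba]
      exact hm b (by simpa [hba] using hb)

theorem DNOF_le_cost [NeZero k] (F : (Fin k → X) → O)
    (ideal : (Fin k → X) → κ → List Bool)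
    (dec : Fin k → (κ → List Bool) → (Fin k → Option X) → O)
    (hσ : ∀ x, σ.Realizes x (ideal x))
    (hdec : ∀ x i m, (∀ a ∈ σ.keys, m a = ideal x a) → dec i m (NOFview i x) = F x) :
    DNOF k X O F ≤ σ.cost := by
  refine Nat.sInf_le ⟨σ.toProtocol dec, rfl, fun x i => hdec x i _ ?_⟩
  have hboard : NOFrun (σ.toProtocol dec) x σ.cost = σ.board x σ.keys fun _ => [] := by
    rw [σ.run_toProtocol dec x le_rfl, List.take_of_length_le (by rw [length_board]; rfl)]
  change ∀ a ∈ σ.keys,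
    σ.parse σ.keys (fun _ => []) (NOFrun (σ.toProtocol dec) x σ.cost) a = ideal x a
  rw [hboard, parse_board]
  exact σ.record_eq_of_realizes (hσ x) [] σ.keys _ rfl (by simp)

end NOFSchedule

theorem DNOF_zero_parties {X O : Type} (F : (Fin 0 → X) → O) : DNOF 0 X O F = 0 :=
  Nat.sInf_eq_zero.2 <| Or.inr <| Set.eq_empty_iff_forall_notMem.2 fun _ ⟨P, _⟩ =>
    (P.speaker []).elim0

theorem DNOF_directSum_one_party {ℓ n : ℕ} (πs : Fin ℓ → Equiv.Perm (Fin 1))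
    (f : (Fin 1 → Fin n → Bool) → Bool) (Q : Fin ℓ → MyoProtocol 1 (Fin n → Bool) Bool)
    (hQ : ∀ u, MyoComputes (πs u) (Q u) f) :
    DNOF 1 (Fin ℓ → Fin n → Bool) (Fin ℓ → Bool) (directSum ℓ f) = 0 := by
  have hview (u : Fin ℓ) (y : Fin 1 → Fin n → Bool) :
      myoView (πs u) 0 y = fun _ => none := by
    funext j
    simp [myoView]
  refine Nat.le_zero.1 (Nat.sInf_le ⟨⟨0, fun _ => 0, fun _ _ => false,
    fun _ _ _ u => (Q u).out ((Q u).msg 0 [] fun _ => none) fun _ => none⟩, rfl,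
    fun x _ => funext fun u => ?_⟩)
  have h := hQ u (Function.swap x u)
  change (Q u).out ((Q u).msg 0 [] (myoView (πs u) 0 _)) (myoView (πs u) 0 _) = _ at h
  rwa [hview] at h

section XorBits

variable {ι : Type}

/-- Bitwise XOR of `a` and of the `w u`, `u ∈ U`, on the first `c` bits. -/
def xorBits (c : ℕ) (a : List Bool) (U : Finset ι) (w : ι → List Bool) : List Bool :=
  (List.range c).map fun i =>
    decide (((a.getD i false).toNat : ZMod 2) +
      ∑ u ∈ U, (((w u).getD i false).toNat : ZMod 2) = 1)

@[simp]
theorem length_xorBits (c : ℕ) (a : List Bool) (U : Finset ι) (w : ι → List Bool) :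
    (xorBits c a U w).length = c := by
  simp [xorBits]

theorem xorBits_congr {c : ℕ} {a : List Bool} {U : Finset ι} {w w' : ι → List Bool}
    (h : ∀ u ∈ U, w u = w' u) : xorBits c a U w = xorBits c a U w' := by
  unfold xorBits
  congr! 4 with i
  refine congrArg _ (Finset.sum_congr rfl fun u hu => ?_)
  rw [h u hu]

theorem xorBits_xorBits_erase [DecidableEq ι] {c : ℕ} {U : Finset ι}
    {w : ι → List Bool} {u : ι} (hu : u ∈ U) (hw : (w u).length = c) :
    xorBits c (xorBits c [] U w) (U.erase u) w = w u := by
  have toNat_decide (z : ZMod 2) : ((decide (z = 1)).toNat : ZMod 2) = z := by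
    fin_cases z <;> rfl
  have decide_toNat (b : Bool) : decide ((b.toNat : ZMod 2) = 1) = b := by
    cases b <;> rfl
  apply List.ext_getElem (by simp [hw])
  intro i hi _
  simp only [length_xorBits] at hi
  simp only [xorBits, List.getElem_map, List.getElem_range, List.getD_eq_getElem?_getD,
    List.getElem?_map, List.getElem?_range hi, Option.map_some, Option.getD_some,
    List.getElem?_nil, Option.getD_none, Bool.toNat_false, Nat.cast_zero, zero_add, toNat_decide]
  rw [← Finset.add_sum_erase U _ hu, add_assoc, CharTwo.add_self_eq_zero, add_zero,
    decide_toNat, List.getElem?_eq_getElem (hw ▸ hi), Option.getD_some]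

end XorBits

theorem Finset.card_filter_exists_lt {α : Type} [LinearOrder α] (U : Finset α) :
    (U.filter fun u => ∃ u' ∈ U, u' < u).card = U.card - 1 := by
  rcases U.eq_empty_or_nonempty with rfl | hU
  · simp
  rw [← Finset.card_erase_of_mem (Finset.min'_mem U hU)]
  congr 1
  ext u
  simp only [Finset.mem_filter, Finset.mem_erase]
  constructor
  · rintro ⟨hu, u', hu', hlt⟩
    exact ⟨(lt_of_le_of_lt (Finset.min'_le U u' hu') hlt).ne', hu⟩
  · rintro ⟨hne, hu⟩
    exact ⟨hu, _, Finset.min'_mem U hU, lt_of_le_of_ne (Finset.min'_le U u hu) (Ne.symm hne)⟩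

namespace IsRepetitive

variable {k ℓ : ℕ} {πs : Fin ℓ → Equiv.Perm (Fin k)}
  {S : Finset (ℕ × Fin k × Finset (Fin ℓ))}

theorem eq_of_mem (hS : IsRepetitive k ℓ πs S) {t : ℕ} {s s' : Fin k} {U U' : Finset (Fin ℓ)}
    {u : Fin ℓ} (h : (t, s, U) ∈ S) (h' : (t, s', U') ∈ S) (hu : u ∈ U) (hu' : u ∈ U') :
    s = s' ∧ U = U' := by
  have hs : s = s' := (πs u).symm.injective <| Fin.ext <| by
    rw [(hS.1 _ h).2.1 u hu, (hS.1 _ h').2.1 u hu']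
  subst hs
  refine ⟨rfl, by_contra fun hne => ?_⟩
  have hdisj := (hS.2 _ h _ h' (by simpa using hne)).2 rfl
  exact Finset.notMem_empty u (hdisj ▸ Finset.mem_inter.mpr ⟨hu, hu'⟩)

theorem notMem_of_mem_succ (hS : IsRepetitive k ℓ πs S) {t : ℕ} {s s' : Fin k}
    {U U' : Finset (Fin ℓ)} {u : Fin ℓ} (h : (t + 1, s, U) ∈ S) (hu : u ∈ U)
    (h' : (t, s', U') ∈ S) : u ∉ U' := fun hu' =>
  (hS.2 _ h _ h' (by simp)).1 u hu' ((hS.1 _ h).2.1 u hu)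

end IsRepetitive

def stepKeys (k ℓ : ℕ) : List (ℕ × Fin ℓ) :=
  (List.range k).flatMap fun t => (List.finRange ℓ).map (t, ·)

theorem mem_stepKeys {k ℓ : ℕ} {a : ℕ × Fin ℓ} : a ∈ stepKeys k ℓ ↔ a.1 < k := by
  simp [stepKeys, Prod.ext_iff, eq_comm]

theorem pairwise_stepKeys (k ℓ : ℕ) : (stepKeys k ℓ).Pairwise fun a b => a.1 ≤ b.1 := by
  rw [stepKeys, List.pairwise_flatMap]
  refine ⟨fun t _ => ?_, (List.pairwise_lt_range).imp fun h => ?_⟩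
  · simp [List.pairwise_iff_get]
  · simp only [List.mem_map]
    rintro _ ⟨_, _, rfl⟩ _ ⟨_, _, rfl⟩
    exact h.le

theorem mem_prefix_of_fst_lt {k ℓ : ℕ} {done rest : List (ℕ × Fin ℓ)}
    {a b : ℕ × Fin ℓ}
    (h : stepKeys k ℓ = done ++ a :: rest) (hb : b.1 < k) (hlt : b.1 < a.1) : b ∈ done := by
  have hmem : b ∈ done ++ a :: rest := h ▸ mem_stepKeys.2 hb
  have hpw := h ▸ pairwise_stepKeys k ℓ
  rw [List.pairwise_append, List.pairwise_cons] at hpw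
  rcases List.mem_append.1 hmem with hd | hb'
  · exact hd
  · rcases List.mem_cons.1 hb' with rfl | hr
    · omega
    · exact absurd (hpw.2.1.1 b hr) (by omega)

theorem sum_map_stepKeys {k ℓ : ℕ} (g : ℕ × Fin ℓ → ℕ) :
    ((stepKeys k ℓ).map g).sum = ∑ t ∈ Finset.range k, ∑ u, g (t, u) := by
  induction k with
  | zero => rfl
  | succ k ih =>
    rw [Finset.sum_range_succ, ← ih, Fin.sum_univ_def, stepKeys, List.range_succ,
      List.flatMap_append, List.map_append, List.sum_append, stepKeys]
    simp [Function.comp_def]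

structure MyopicFamily (k ℓ n : ℕ) where
  πs : Fin ℓ → Equiv.Perm (Fin k)
  f : (Fin k → Fin n → Bool) → Bool
  S : Finset (ℕ × Fin k × Finset (Fin ℓ))
  repetitive : IsRepetitive k ℓ πs S
  Q : Fin ℓ → MyoProtocol k (Fin n → Bool) Bool
  computes : ∀ u, MyoComputes (πs u) (Q u) f
  L : ℕ → ℕ
  length_msg : ∀ u x t, t < k - 1 → (myoMsg (πs u) (Q u) x t).length = L t

namespace MyopicFamily

variable {k ℓ n : ℕ} (C : MyopicFamily k ℓ n)

local notation "Input" => Fin k → Fin ℓ → Fin n → Bool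
local notation "View" => Fin k → Option (Fin ℓ → Fin n → Bool)

def trueMsg (u : Fin ℓ) (x : Input) (t : ℕ) : List Bool :=
  myoMsg (C.πs u) (C.Q u) (Function.swap x u) t

def received (u : Fin ℓ) (x : Input) : ℕ → List Bool
  | 0 => []
  | t + 1 => C.trueMsg u x t

theorem trueMsg_eq (u : Fin ℓ) (x : Input) (t : ℕ) :
    C.trueMsg u x t =
      (C.Q u).msg t (C.received u x t) (myoView (C.πs u) t (Function.swap x u)) := by
  cases t <;> rfl

def Visible (u : Fin ℓ) (t : ℕ) (p : Fin k) : Prop :=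
  ((C.πs u).symm p : ℕ) < t ∨ ((C.πs u).symm p : ℕ) = t + 1

instance (u : Fin ℓ) (t : ℕ) : DecidablePred (C.Visible u t) := fun _ =>
  inferInstanceAs (Decidable (_ ∨ _))

/-- The myopic view of instance `u` at step `t`, cut out of the NOF view `v`. -/
def viewAt (v : View) (u : Fin ℓ) (t : ℕ) : Fin k → Option (Fin n → Bool) :=
  fun j => if C.Visible u t j then (v j).map (· u) else none

theorem viewAt_NOFview {p : Fin k} {u : Fin ℓ} {t : ℕ} (hp : ¬ C.Visible u t p) (x : Input) :
    C.viewAt (NOFview p x) u t = myoView (C.πs u) t (Function.swap x u) := by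
  funext j
  change (if C.Visible u t j then _ else _) = if C.Visible u t j then _ else _
  split_ifs with hj
  · rw [NOFview, if_neg (by rintro rfl; exact hp hj)]
    rfl
  · rfl

def nextMsg (t : ℕ) (u : Fin ℓ) (prev : List Bool) (v : View) : List Bool :=
  (C.Q u).msg t prev (C.viewAt v u t)

theorem nextMsg_received {p : Fin k} {u : Fin ℓ} {t : ℕ} (hp : ¬ C.Visible u t p) (x : Input) :
    C.nextMsg t u (C.received u x t) (NOFview p x) = C.trueMsg u x t := by
  rw [nextMsg, C.viewAt_NOFview hp, trueMsg_eq]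

def Covered (t : ℕ) (u : Fin ℓ) : Prop :=
  ∃ sU : Fin k × Finset (Fin ℓ), (t, sU.1, sU.2) ∈ C.S ∧ u ∈ sU.2

noncomputable def cover {t : ℕ} {u : Fin ℓ} (h : C.Covered t u) : Fin k × Finset (Fin ℓ) :=
  h.choose

theorem cover_mem {t : ℕ} {u : Fin ℓ} (h : C.Covered t u) :
    (t, (C.cover h).1, (C.cover h).2) ∈ C.S :=
  h.choose_spec.1

theorem mem_cover {t : ℕ} {u : Fin ℓ} (h : C.Covered t u) : u ∈ (C.cover h).2 :=
  h.choose_spec.2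

theorem cover_eq_of_mem {t : ℕ} {u u' : Fin ℓ} (h : C.Covered t u) (h' : C.Covered t u')
    (hu' : u' ∈ (C.cover h).2) : C.cover h' = C.cover h := by
  obtain ⟨hs, hU⟩ :=
    C.repetitive.eq_of_mem (C.cover_mem h') (C.cover_mem h) (C.mem_cover h') hu'
  exact Prod.ext hs hU

theorem lt_of_covered {t : ℕ} {u : Fin ℓ} (h : C.Covered t u) : t + 1 < k :=
  (C.repetitive.1 _ (C.cover_mem h)).1

theorem not_covered_of_covered_succ {t : ℕ} {u u' : Fin ℓ} (h : C.Covered (t + 1) u)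
    (hu' : u' ∈ (C.cover h).2) : ¬ C.Covered t u' := fun h' =>
  C.repetitive.notMem_of_mem_succ (C.cover_mem h) hu' (C.cover_mem h') (C.mem_cover h')

theorem not_visible_cover_speaker {t : ℕ} {u u' : Fin ℓ} (h : C.Covered t u)
    (hu' : u' ∈ (C.cover h).2) : ¬ C.Visible u' t (C.cover h).1 := by
  rw [Visible, (C.repetitive.1 _ (C.cover_mem h)).2.1 u' hu']
  omega

theorem not_visible_next_of_mem_cover {t : ℕ} {u u' : Fin ℓ} (h : C.Covered t u)
    (hu' : u' ∈ (C.cover h).2) (hne : u' ≠ u) :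
    ¬ C.Visible u' t (C.πs u ⟨t + 1, C.lt_of_covered h⟩) := by
  obtain ⟨-, -, hdistinct, hprev⟩ := C.repetitive.1 _ (C.cover_mem h)
  have hnext : ((C.πs u).symm (C.πs u ⟨t + 1, C.lt_of_covered h⟩) : ℕ) = t + 1 := by simp
  rintro (hlt | heq)
  · exact hprev u' hu' u (C.mem_cover h) _ hlt hnext
  · exact hne (hdistinct u' hu' u (C.mem_cover h) _ heq hnext)

noncomputable def leader {t : ℕ} {u : Fin ℓ} (h : C.Covered t u) : Fin ℓ :=
  (C.cover h).2.min' ⟨u, C.mem_cover h⟩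

/-- Instance `u` writes nothing at step `t`: a smaller instance of its group speaks for it. -/
def Silent (t : ℕ) (u : Fin ℓ) : Prop :=
  ∃ σ ∈ C.S, σ.1 = t ∧ u ∈ σ.2.2 ∧ ∃ u' ∈ σ.2.2, u' < u

theorem covered_of_silent {t : ℕ} {u : Fin ℓ} (h : C.Silent t u) : C.Covered t u := by
  obtain ⟨⟨t', s, U⟩, hσ, rfl, hu, -⟩ := h
  exact ⟨(s, U), hσ, hu⟩

theorem leader_covered {t : ℕ} {u : Fin ℓ} (h : C.Covered t u) : C.Covered t (C.leader h) :=
  ⟨C.cover h, C.cover_mem h, Finset.min'_mem _ _⟩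

theorem not_silent_leader {t : ℕ} {u : Fin ℓ} (h : C.Covered t u) :
    ¬ C.Silent t (C.leader h) := by
  rintro ⟨⟨t', s, U⟩, hσ, rfl, hl, u', hu', hlt⟩
  obtain ⟨-, hU⟩ := C.repetitive.eq_of_mem hσ (C.cover_mem h) hl (Finset.min'_mem _ _)
  exact absurd (Finset.min'_le _ _ (hU ▸ hu')) (not_le.mpr hlt)

open Classical in
/-- Slot `(k - 1, u)` holds the `u`-th output bit. -/
noncomputable def ideal (x : Input) : ℕ × Fin ℓ → List Bool
  | (t, u) =>
    if t < k - 1 then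
      if C.Silent t u then []
      else if h : C.Covered t u then xorBits (C.L t) [] (C.cover h).2 fun u' => C.trueMsg u' x t
      else C.trueMsg u x t
    else [C.f (Function.swap x u)]

theorem ideal_of_not_covered {t : ℕ} {u : Fin ℓ} (ht : t < k - 1) (h : ¬ C.Covered t u)
    (x : Input) : C.ideal x (t, u) = C.trueMsg u x t := by
  simp [ideal, ht, h, mt C.covered_of_silent h]

theorem ideal_leader {t : ℕ} {u : Fin ℓ} (h : C.Covered t u) (x : Input) :
    C.ideal x (t, C.leader h) = xorBits (C.L t) [] (C.cover h).2 fun u' => C.trueMsg u' x t := by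
  have hl := C.leader_covered h
  have ht : t < k - 1 := by have := C.lt_of_covered h; omega
  simp only [ideal, ht, if_true, C.not_silent_leader h, if_false, dif_pos hl,
    C.cover_eq_of_mem h hl (Finset.min'_mem _ _)]

def AgreesBelow (x : Input) (t : ℕ) (m : ℕ × Fin ℓ → List Bool) : Prop :=
  ∀ t' < t, ∀ u', m (t', u') = C.ideal x (t', u')

/-- The message received by instance `u` at step `t`, assuming it was written in clear. -/
def readReceived (u : Fin ℓ) (m : ℕ × Fin ℓ → List Bool) : ℕ → List Bool
  | 0 => []
  | t + 1 => m (t, u)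

theorem readReceived_eq {t : ℕ} {u : Fin ℓ} {m : ℕ × Fin ℓ → List Bool} {x : Input}
    (ht : t < k) (hu : ∀ t', t = t' + 1 → ¬ C.Covered t' u)
    (hm : C.AgreesBelow x t m) :
    readReceived u m t = C.received u x t := by
  cases t with
  | zero => rfl
  | succ t =>
    rw [readReceived, received, hm t (by omega), C.ideal_of_not_covered (by omega) (hu t rfl)]

open Classical in
noncomputable def decode (t : ℕ) (u : Fin ℓ) (m : ℕ × Fin ℓ → List Bool) (v : View) :
    List Bool :=
  if h : C.Covered t u then
    xorBits (C.L t) (m (t, C.leader h)) ((C.cover h).2.erase u) fun u' =>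
      C.nextMsg t u' (readReceived u' m t) v
  else m (t, u)

noncomputable def decodeReceived (u : Fin ℓ) (m : ℕ × Fin ℓ → List Bool) (v : View) :
    ℕ → List Bool
  | 0 => []
  | t + 1 => C.decode t u m v

theorem decode_eq {t : ℕ} {u : Fin ℓ} {m : ℕ × Fin ℓ → List Bool} {x : Input}
    (ht : t + 1 < k) (hm : C.AgreesBelow x (t + 1) m) :
    C.decode t u m (NOFview (C.πs u ⟨t + 1, ht⟩) x) = C.trueMsg u x t := by
  by_cases h : C.Covered t u
  · have hothers : ∀ u' ∈ (C.cover h).2.erase u,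
        C.nextMsg t u' (readReceived u' m t) (NOFview (C.πs u ⟨t + 1, ht⟩) x) =
          C.trueMsg u' x t := by
      intro u' hu'
      obtain ⟨hne, hu'⟩ := Finset.mem_erase.mp hu'
      rw [C.readReceived_eq (by omega) ?_ fun t' ht' => hm t' (by omega)]
      · exact C.nextMsg_received (C.not_visible_next_of_mem_cover h hu' hne) x
      · rintro t rfl
        exact C.not_covered_of_covered_succ h hu'
    rw [decode, dif_pos h, xorBits_congr hothers, hm t (by omega), C.ideal_leader h,
      xorBits_xorBits_erase (C.mem_cover h) (C.length_msg u _ t (by omega))]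
  · rw [decode, dif_neg h, hm t (by omega), C.ideal_of_not_covered (by omega) h]

theorem decodeReceived_eq {t : ℕ} {u : Fin ℓ} {m : ℕ × Fin ℓ → List Bool} {x : Input}
    (ht : t < k) (hm : C.AgreesBelow x t m) :
    C.decodeReceived u m (NOFview (C.πs u ⟨t, ht⟩) x) t = C.received u x t := by
  cases t with
  | zero => rfl
  | succ t => exact C.decode_eq ht hm

theorem not_visible_self {t : ℕ} (u : Fin ℓ) (ht : t < k) :
    ¬ C.Visible u t (C.πs u ⟨t, ht⟩) := by
  simp [Visible]

open Classical in
noncomputable def slotMsg : ℕ × Fin ℓ → (ℕ × Fin ℓ → List Bool) → View → List Bool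
  | (t, u), m, v =>
    if t < k - 1 then
      if C.Silent t u then []
      else if h : C.Covered t u then
        xorBits (C.L t) [] (C.cover h).2 fun u' => C.nextMsg t u' (readReceived u' m t) v
      else C.nextMsg t u (C.decodeReceived u m v t) v
    else [(C.Q u).out (C.decodeReceived u m v t) (C.viewAt v u t)]

open Classical in
noncomputable def slotSpeaker [NeZero k] : ℕ × Fin ℓ → Fin k
  | (t, u) => if h : C.Covered t u then (C.cover h).1 else C.πs u (Fin.ofNat k t)

theorem slotSpeaker_of_not_covered [NeZero k] {t : ℕ} {u : Fin ℓ} (h : ¬ C.Covered t u)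
    (ht : t < k) : C.slotSpeaker (t, u) = C.πs u ⟨t, ht⟩ := by
  simp [slotSpeaker, h, Fin.ofNat, Nat.mod_eq_of_lt ht]

theorem slotMsg_eq [NeZero k] (hk : 2 ≤ k) {t : ℕ} {u : Fin ℓ}
    {m : ℕ × Fin ℓ → List Bool} {x : Input} (ht : t < k) (hm : C.AgreesBelow x t m) :
    C.slotMsg (t, u) m (NOFview (C.slotSpeaker (t, u)) x) = C.ideal x (t, u) := by
  by_cases htk : t < k - 1
  · by_cases hs : C.Silent t u
    · simp [slotMsg, ideal, htk, hs]
    by_cases h : C.Covered t u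
    · have hspk : C.slotSpeaker (t, u) = (C.cover h).1 := dif_pos h
      simp only [slotMsg, ideal, htk, hs, if_true, if_false, dif_pos h, hspk]
      refine xorBits_congr fun u' hu' => ?_
      rw [C.readReceived_eq ht ?_ hm]
      · exact C.nextMsg_received (C.not_visible_cover_speaker h hu') x
      · rintro t rfl
        exact C.not_covered_of_covered_succ h hu'
    · simp only [slotMsg, ideal, htk, hs, if_true, if_false, dif_neg h,
        C.slotSpeaker_of_not_covered h ht, C.decodeReceived_eq ht hm]
      exact C.nextMsg_received (C.not_visible_self u ht) x
  · have h : ¬ C.Covered t u := fun h => htk (by have := C.lt_of_covered h; omega)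
    simp only [slotMsg, ideal, htk, if_false, C.slotSpeaker_of_not_covered h ht,
      C.decodeReceived_eq ht hm, C.viewAt_NOFview (C.not_visible_self u ht)]
    have hkt : t = (k - 2) + 1 := by omega
    subst hkt
    have := C.computes u (Function.swap x u)
    rw [show k - 1 = k - 2 + 1 by omega] at this
    exact congrArg (· :: []) this

open Classical in
noncomputable def slotLen : ℕ × Fin ℓ → ℕ
  | (t, u) => if t < k - 1 then (if C.Silent t u then 0 else C.L t) else 1

theorem length_ideal (t : ℕ) (u : Fin ℓ) (x : Input) :
    (C.ideal x (t, u)).length = C.slotLen (t, u) := by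
  by_cases htk : t < k - 1
  · by_cases hs : C.Silent t u
    · simp [ideal, slotLen, htk, hs]
    by_cases h : C.Covered t u
    · simp [ideal, slotLen, htk, hs, h]
    · simp [ideal, slotLen, htk, hs, h, trueMsg, C.length_msg u _ t htk]
  · simp [ideal, slotLen, htk]

noncomputable def schedule [NeZero k] :
    NOFSchedule k (Fin ℓ → Fin n → Bool) (ℕ × Fin ℓ) where
  keys := stepKeys k ℓ
  speaker := C.slotSpeaker
  len := C.slotLen
  msg := C.slotMsg

theorem dnof_le_cost [NeZero k] (hk : 2 ≤ k) :
    DNOF k (Fin ℓ → Fin n → Bool) (Fin ℓ → Bool) (directSum ℓ C.f) ≤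
      C.schedule.cost := by
  refine C.schedule.DNOF_le_cost _ C.ideal (fun _ m _ u => (m (k - 1, u)).getD 0 false)
    (fun x => ⟨fun a _ => C.length_ideal a.1 a.2 x, ?_⟩) ?_
  · rintro done ⟨t, u⟩ rest (hks : stepKeys k ℓ = _) m hm
    have ht : t < k := mem_stepKeys.1 (show (t, u) ∈ stepKeys k ℓ by simp [hks])
    exact C.slotMsg_eq hk ht fun t' ht' u' => hm _ (mem_prefix_of_fst_lt hks (by omega) ht')
  · intro x i m hm
    funext u
    rw [hm _ (mem_stepKeys.2 (by omega))]
    simp [ideal, directSum]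

open Classical in
theorem card_silent (t : ℕ) :
    (Finset.univ.filter (C.Silent t)).card = ∑ σ ∈ C.S with σ.1 = t, (σ.2.2.card - 1) := by
  have hbiUnion : Finset.univ.filter (C.Silent t) = (C.S.filter (·.1 = t)).biUnion
      fun σ => σ.2.2.filter fun u => ∃ u' ∈ σ.2.2, u' < u := by
    ext u
    simp [Silent, and_assoc]
  rw [hbiUnion, Finset.card_biUnion]
  · exact Finset.sum_congr rfl fun σ _ => by convert Finset.card_filter_exists_lt σ.2.2
  · rintro ⟨t₁, s₁, U₁⟩ h₁ ⟨t₂, s₂, U₂⟩ h₂ hne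
    simp only [Finset.coe_filter, Set.mem_ofPred_eq] at h₁ h₂
    obtain ⟨h₁, rfl⟩ := h₁
    obtain ⟨h₂, rfl⟩ := h₂
    refine Finset.disjoint_left.2 fun u hu₁ hu₂ => hne ?_
    obtain ⟨rfl, rfl⟩ := C.repetitive.eq_of_mem h₁ h₂ (Finset.mem_filter.1 hu₁).1
      (Finset.mem_filter.1 hu₂).1
    rfl

theorem sum_slotLen {t : ℕ} (ht : t < k - 1) :
    ∑ u, C.slotLen (t, u) + (∑ σ ∈ C.S with σ.1 = t, (σ.2.2.card - 1)) * C.L t =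
      ℓ * C.L t := by
  classical
  have hsum : ∑ u, C.slotLen (t, u) =
      (Finset.univ.filter fun u => ¬ C.Silent t u).card * C.L t := by
    simp only [slotLen, ht, if_true]
    rw [Finset.sum_ite]
    simp
  rw [hsum, ← card_silent, ← add_mul, add_comm, Finset.card_filter_add_card_filter_not,
    Finset.card_univ, Fintype.card_fin]

theorem cost_add_sum [NeZero k] :
    C.schedule.cost + ∑ σ ∈ C.S, (σ.2.2.card - 1) * C.L σ.1 =
      ℓ * ∑ t ∈ Finset.range (k - 1), C.L t + ℓ := by
  have hsplit := Finset.sum_range_succ (fun t => ∑ u, C.slotLen (t, u)) (k - 1)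
  rw [Nat.sub_add_cancel (Nat.pos_of_neZero k)] at hsplit
  have hfiber : ∑ σ ∈ C.S, (σ.2.2.card - 1) * C.L σ.1 =
      ∑ t ∈ Finset.range (k - 1),
        (∑ σ ∈ C.S with σ.1 = t, (σ.2.2.card - 1)) * C.L t := by
    rw [← Finset.sum_fiberwise_of_maps_to (g := Prod.fst) (t := Finset.range (k - 1))
      fun σ hσ => Finset.mem_range.2 (by have := (C.repetitive.1 σ hσ).1; omega)]
    refine Finset.sum_congr rfl fun t _ => ?_
    rw [Finset.sum_mul]
    exact Finset.sum_congr rfl fun σ hσ => by rw [(Finset.mem_filter.1 hσ).2]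
  have hlast : ∑ u, C.slotLen (k - 1, u) = ℓ := by simp [slotLen]
  rw [NOFSchedule.cost, schedule, sum_map_stepKeys]
  simp only
  rw [hsplit, hlast,
    hfiber, add_right_comm, ← Finset.sum_add_distrib, Finset.mul_sum]
  congr 1
  exact Finset.sum_congr rfl fun t ht => C.sum_slotLen (Finset.mem_range.1 ht)

theorem dnof_directSum_le (hk : 2 ≤ k) :
    DNOF k (Fin ℓ → Fin n → Bool) (Fin ℓ → Bool) (directSum ℓ C.f) ≤
      ℓ * (∑ t ∈ Finset.range (k - 1), C.L t) + ℓ -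
        ∑ σ ∈ C.S, (σ.2.2.card - 1) * C.L σ.1 := by
  have : NeZero k := ⟨by omega⟩
  have := C.cost_add_sum
  have := C.dnof_le_cost hk
  omega

end MyopicFamily

/-- **Corollary 2 of the paper.**  Let `S` be a `Π`-repetitive set and
let `Q_{π_1},…,Q_{π_ℓ}` be oblivious `MYOPIC_{π_u}` protocols computing `f`, all with
the same communication pattern `L` (the message at step `t` always has length
`L t`).  Then `D^NOF(f^ℓ) ≤ ℓ·C + ℓ − Σ_{(t,s,U)∈S} (|U|−1)·L(t)`, where
`C = Σ_{t} L(t)` is the cost of `Q_{π_1}`. -/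
theorem dnof_directSum_le_of_repetitiveSet_oblivious (k ℓ n : ℕ)
    (πs : Fin ℓ → Equiv.Perm (Fin k))
    (f : (Fin k → (Fin n → Bool)) → Bool)
    (S : Finset (ℕ × Fin k × Finset (Fin ℓ)))
    (hS : IsRepetitive k ℓ πs S)
    (Q : Fin ℓ → MyoProtocol k (Fin n → Bool) Bool)
    (hQ : ∀ u, MyoComputes (πs u) (Q u) f)
    (L : ℕ → ℕ)
    (hobl : ∀ (u : Fin ℓ) (x : Fin k → (Fin n → Bool)) (t : ℕ), t < k - 1 →
      (myoMsg (πs u) (Q u) x t).length = L t) :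
    DNOF k (Fin ℓ → Fin n → Bool) (Fin ℓ → Bool) (directSum ℓ f) ≤
      ℓ * (∑ t ∈ Finset.range (k - 1), L t) + ℓ -
        ∑ s ∈ S, (s.2.2.card - 1) * L s.1 := by
  rcases Nat.lt_or_ge k 2 with hk | hk
  · interval_cases k
    · exact (DNOF_zero_parties _).trans_le (Nat.zero_le _)
    · exact (DNOF_directSum_one_party πs f Q hQ).trans_le (Nat.zero_le _)
  · exact (MyopicFamily.mk πs f S hS Q hQ L hobl).dnof_directSum_le hk
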